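/- If L ⊆ Σ* is accepted by a deterministic nested stack automaton with limited erasing and f : Δ* → Σ* is a monoid homomorphism between finitely generated free monoids that maps no generator to the empty word, then f⁻¹(L) is also accepted by a deterministic nested stack automaton with limited erasing. -/

import Mathlib

/-! ### Nested stack automata -/

/-- A finite ordered rooted tree with edge labels in `Ξ`
(children listed in order; the last child is the latest). -/
inductive MTree (Ξ : Type) : Type
  | node (children : List (Ξ × MTree Ξ)) : MTree Ξ

namespace MTree

variable {Ξ : Type}

/-- The list of children (with inedge labels) of the root. -/
def children : MTree Ξ → List (Ξ × MTree Ξ)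
  | node cs => cs

/-- The subtree at depth `n` along the spine (the chain of latest children from the root,
which is the path from the root to the latest vertex). -/
def spine : ℕ → MTree Ξ → Option (MTree Ξ)
  | 0, t => some t
  | n + 1, t => t.children.getLast?.bind fun p => spine n p.2

/-- The label of the inedge to the spine vertex at depth `n` (`none` for the root). -/
def labelTo (t : MTree Ξ) : ℕ → Option Ξ
  | 0 => none
  | n + 1 => (spine n t).bind fun s => s.children.getLast?.map Prod.fst

/-- Modify the subtree at depth `n` along the spine. -/
def modify : ℕ → (MTree Ξ → Option (MTree Ξ)) → MTree Ξ → Option (MTree Ξ)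
  | 0, f, t => f t
  | n + 1, f, t =>
    match t.children.getLast? with
    | some (x, c) => (modify n f c).map fun c' => node (t.children.dropLast ++ [(x, c')])
    | none => none

mutual
  /-- The number of edges of a memory tree. -/
  def esize : MTree Ξ → ℕ
    | node cs => esizeList cs
  /-- The total number of edges in a forest. -/
  def esizeList : List (Ξ × MTree Ξ) → ℕ
    | [] => 0
    | (_, t) :: rest => t.esize + 1 + esizeList rest
end

end MTree

/-- A memory configuration: a memory tree together with the depth of the distinguished
vertex along the spine (the path from the root to the latest vertex). -/
def MCfg (Ξ : Type) : Type := MTree Ξ × ℕ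

/-- The empty memory: the one-vertex tree with the root distinguished. -/
def MCfg.initial (Ξ : Type) : MCfg Ξ := (MTree.node [], 0)

/-- The generators of the monoid of memory operations of a nested stack automaton:
the identity, move-down `D x`, move-up `U x` (with `x = none` standing for `ε`,
the inedge label of the root), push `P x` and pop `Q x`. -/
inductive NSAOp (Ξ : Type) : Type
  | id : NSAOp Ξ
  | D (x : Ξ) : NSAOp Ξ
  | U (x : Option Ξ) : NSAOp Ξ
  | P (x : Ξ) : NSAOp Ξ
  | Q (x : Ξ) : NSAOp Ξ

namespace NSAOp

variable {Ξ : Type}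

open scoped Classical in
/-- The partial action of a memory operation on memory configurations.
`D x` moves the distinguished vertex to its parent (defined when the inedge label is `x`
and it is not the root); `U x` moves it to its latest child (defined when the inedge label
of the current vertex is `x`, with `x = ε` exactly at the root, and it is not a leaf);
`P x` attaches a new latest edge labelled `x` at the distinguished vertex and distinguishes
the new leaf; `Q x` deletes the distinguished vertex when it is a leaf (not the root) with
inedge label `x`, distinguishing its parent. -/
noncomputable def apply : NSAOp Ξ → MCfg Ξ → Option (MCfg Ξ)
  | .id, c => some c
  | .D x, (t, n) => if 1 ≤ n ∧ t.labelTo n = some x then some (t, n - 1) else none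
  | .U x, (t, n) =>
      if t.labelTo n = x ∧ (∃ s, t.spine n = some s ∧ s.children ≠ []) then some (t, n + 1)
      else none
  | .P x, (t, n) =>
      (t.modify n fun s => some (.node (s.children ++ [(x, .node [])]))).map
        fun t' => (t', n + 1)
  | .Q x, (t, n) =>
      if 1 ≤ n ∧ t.labelTo n = some x ∧ t.spine n = some (.node []) then
        (t.modify (n - 1) fun s => some (.node s.children.dropLast)).map fun t' => (t', n - 1)
      else none

/-- Whether an operation is a pop (erasing) operation. -/
def isPop : NSAOp Ξ → Bool
  | .Q _ => true
  | _ => false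

end NSAOp

/-- A nested stack automaton over the input alphabet `A`: a finite directed graph with a
designated initial vertex and designated final vertices, whose edges are labelled by pairs
of a memory operation and an input letter from `A ∪ {ε}` (`ε` is `none`).  The memory
alphabet is fixed to be the countable alphabet `ℕ`. -/
structure NSA (A : Type) : Type 1 where
  Q : Type
  finQ : Finite Q
  init : Q
  final : Set Q
  edges : Set (Q × NSAOp ℕ × Option A × Q)
  finEdges : edges.Finite

namespace NSA

variable {A : Type} (M : NSA A)

/-- A configuration: an internal state together with a memory configuration. -/
abbrev Cfg := M.Q × MCfg ℕ

/-- The initial configuration. -/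
def initCfg : M.Cfg := (M.init, MCfg.initial ℕ)

/-- One move: an edge of the automaton whose memory operation is defined at the current
memory, reading the input letter `a` (`none` meaning `ε`). -/
def CStep (c : M.Cfg) (a : Option A) (c' : M.Cfg) : Prop :=
  ∃ op : NSAOp ℕ, (c.1, op, a, c'.1) ∈ M.edges ∧ op.apply c.2 = some c'.2

/-- A finite sequence of moves, recording the sequence of input letters. -/
inductive Steps : M.Cfg → List (Option A) → M.Cfg → Prop
  | nil (c : M.Cfg) : Steps c [] c
  | cons {c : M.Cfg} {a : Option A} {c' : M.Cfg} {l : List (Option A)} {c'' : M.Cfg} :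
      M.CStep c a c' → Steps c' l c'' → Steps c (a :: l) c''

/-- Acceptance by final state and empty memory. -/
def Accepts (w : List A) : Prop :=
  ∃ (l : List (Option A)) (qf : M.Q), qf ∈ M.final ∧ l.reduceOption = w ∧
    M.Steps M.initCfg l (qf, MCfg.initial ℕ)

/-- The language accepted by the automaton. -/
def Lang : Set (List A) := {w | M.Accepts w}

/-- A configuration is accessible if it is the outcome of a computation which extends to a
successful (accepting) one. -/
def Accessible (c : M.Cfg) : Prop :=
  (∃ l : List (Option A), M.Steps M.initCfg l c) ∧
  ∃ (l' : List (Option A)) (qf : M.Q), qf ∈ M.final ∧ M.Steps c l' (qf, MCfg.initial ℕ)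

/-- Determinism: each combination of state, memory and input letter admits at most one
applicable move (where `ε`-moves conflict with every letter). -/
def Deterministic : Prop :=
  ∀ (q : M.Q) (T : MCfg ℕ) (a : A) (e₁ e₂ : M.Q × NSAOp ℕ × Option A × M.Q),
    e₁ ∈ M.edges → e₂ ∈ M.edges → e₁.1 = q → e₂.1 = q →
    (e₁.2.2.1 = some a ∨ e₁.2.2.1 = none) → (e₂.2.2.1 = some a ∨ e₂.2.2.1 = none) →
    (e₁.2.1.apply T).isSome → (e₂.2.1.apply T).isSome → e₁ = e₂

/-- Limited erasing: there is `k` such that every path in the underlying graph all of whose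
input labels are `ε` contains at most `k` pop operations. -/
def LimitedErasing : Prop :=
  ∃ k : ℕ, ∀ p : List (M.Q × NSAOp ℕ × Option A × M.Q),
    (∀ e ∈ p, e ∈ M.edges) → p.Chain' (fun e e' => e.2.2.2 = e'.1) →
    (∀ e ∈ p, e.2.2.1 = (none : Option A)) →
    p.countP (fun e => e.2.1.isPop) ≤ k

/-- A path in the configuration graph (all its vertices are accessible configurations). -/
inductive CPath : M.Cfg → List (Option A) → M.Cfg → Prop
  | nil {c : M.Cfg} : M.Accessible c → CPath c [] c
  | cons {c : M.Cfg} {a : Option A} {c' : M.Cfg} {l : List (Option A)} {c'' : M.Cfg} :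
      M.Accessible c → M.CStep c a c' → CPath c' l c'' → CPath c (a :: l) c''

/-- A path of `n` consecutive `ε`-labelled edges in the configuration graph. -/
def EPathN : ℕ → M.Cfg → M.Cfg → Prop
  | 0, c, c' => c = c'
  | n + 1, c, c'' => ∃ c' : M.Cfg, M.Accessible c' ∧ M.CStep c none c' ∧ EPathN n c' c''

end NSA

/-- `L` is accepted (by final state and empty memory) by some deterministic nested stack
automaton with limited erasing. -/
def IsDetLimNSALang {A : Type} (L : Set (List A)) : Prop :=
  ∃ M : NSA A, M.Deterministic ∧ M.LimitedErasing ∧ M.Lang = L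

/-! ### Auxiliary construction for the preimage theorem -/

section PreimageConstruction

open FreeMonoid List

variable {Sg Δ : Type} [Fintype Sg] [Fintype Δ]

namespace NSAPre

/-- Buffers of bounded length. -/
abbrev Buf (Sg : Type) (B : ℕ) : Type := {l : List Sg // l.length ≤ B}

instance (B : ℕ) : Finite (Buf Sg B) := (List.finite_length_le Sg B).to_subtype

/-- The empty buffer. -/
def nilB (Sg : Type) (B : ℕ) : Buf Sg B := ⟨[], Nat.zero_le B⟩

variable (M : NSA Sg) (f : FreeMonoid Δ →* FreeMonoid Sg) (B : ℕ)

/-- Edges of the preimage automaton. -/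
inductive Pre : (M.Q × Buf Sg B) × NSAOp ℕ × Option Δ × (M.Q × Buf Sg B) → Prop
  | mirror (q q' : M.Q) (op : NSAOp ℕ) (b : Buf Sg B) :
      (q, op, none, q') ∈ M.edges → Pre ((q, b), op, none, (q', b))
  | consume (q q' : M.Q) (op : NSAOp ℕ) (σ : Sg) (b : Buf Sg B)
      (hb : (σ :: b.val).length ≤ B) :
      (q, op, some σ, q') ∈ M.edges → Pre ((q, ⟨σ :: b.val, hb⟩), op, none, (q', b))
  | read (q q' : M.Q) (op : NSAOp ℕ) (σ : Sg) (d : Δ) (b : Buf Sg B) :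
      (q, op, some σ, q') ∈ M.edges → (f (of d)).toList = σ :: b.val →
      Pre ((q, nilB Sg B), op, some d, (q', b))

/-- The tail of a buffer. -/
def tailB {B : ℕ} (b : Buf Sg B) : Buf Sg B :=
  ⟨b.val.tail, le_trans (List.length_tail (l := b.val) ▸ Nat.sub_le _ _) b.2⟩

/-- The (truncated) tail of the image of a letter. -/
def fTail (d : Δ) : Buf Sg B := ⟨((f (of d)).toList.tail).take B, by
  simp [List.length_take]⟩

/-- A covering function used to prove finiteness of the edge set. -/
def cover : (M.Q × NSAOp ℕ × Option Sg × M.Q) × Buf Sg B × Option Δ →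
    (M.Q × Buf Sg B) × NSAOp ℕ × Option Δ × (M.Q × Buf Sg B) :=
  fun x =>
    match x.1.2.2.1, x.2.2 with
    | none, _ => ((x.1.1, x.2.1), x.1.2.1, none, (x.1.2.2.2, x.2.1))
    | some _, none => ((x.1.1, x.2.1), x.1.2.1, none, (x.1.2.2.2, tailB x.2.1))
    | some _, some d => ((x.1.1, nilB Sg B), x.1.2.1, some d, (x.1.2.2.2, fTail f B d))

lemma pre_finite : {x | Pre M f B x}.Finite := by
  have huniv : (Set.univ : Set (Buf Sg B × Option Δ)).Finite := Set.finite_univ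
  have hprod : (M.edges ×ˢ (Set.univ : Set (Buf Sg B × Option Δ))).Finite :=
    Set.Finite.prod M.finEdges huniv
  have himg : ((cover M f B) '' (M.edges ×ˢ (Set.univ : Set (Buf Sg B × Option Δ)))).Finite :=
    Set.Finite.image _ hprod
  refine Set.Finite.subset himg ?_
  rintro x hx
  cases hx with
  | mirror q q' op b h =>
      exact Set.mem_image_of_mem (cover M f B)
        (Set.mk_mem_prod (b := (b, (none : Option Δ))) h (Set.mem_univ _))
  | consume q q' op σ b hb h =>
      have hbb : (⟨σ :: b.val, hb⟩ : Buf Sg B) = ⟨σ :: b.val, hb⟩ := rfl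
      have hcov : cover M f B ((q, op, some σ, q'), ⟨σ :: b.val, hb⟩, (none : Option Δ))
          = ((q, ⟨σ :: b.val, hb⟩), op, (none : Option Δ), (q', b)) :=
        congrArg (fun z => ((q, (⟨σ :: b.val, hb⟩ : Buf Sg B)), op, (none : Option Δ), (q', z)))
          (Subtype.ext rfl)
      exact hcov ▸ Set.mem_image_of_mem (cover M f B)
        (Set.mk_mem_prod (b := ((⟨σ :: b.val, hb⟩ : Buf Sg B), (none : Option Δ))) h
          (Set.mem_univ _))
  | read q q' op σ d b h hfd =>
      have hcov : cover M f B ((q, op, some σ, q'), b, some d)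
          = ((q, nilB Sg B), op, some d, (q', b)) :=
        congrArg (fun z => ((q, nilB Sg B), op, some d, (q', z)))
          (Subtype.ext (by simp [fTail, hfd, List.take_of_length_le b.2]))
      exact hcov ▸ Set.mem_image_of_mem (cover M f B)
        (Set.mk_mem_prod (b := (b, some d)) h (Set.mem_univ _))

/-- The preimage automaton. -/
def N : NSA Δ where
  Q := M.Q × Buf Sg B
  finQ := have := M.finQ; inferInstance
  init := (M.init, nilB Sg B)
  final := {p | p.1 ∈ M.final ∧ p.2 = nilB Sg B}
  edges := {x | Pre M f B x}
  finEdges := pre_finite M f B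

/-- The image of a word, as a list. -/
def F (w : List Δ) : List Sg := (f (ofList w)).toList

lemma F_nil : F f [] = [] := by
  unfold F; rw [ofList_nil, map_one, toList_one]

lemma F_cons (d : Δ) (w : List Δ) : F f (d :: w) = (f (of d)).toList ++ F f w := by
  unfold F
  rw [ofList_cons, map_mul, toList_mul]

lemma F_eq_nil (hf : ∀ d : Δ, f (of d) ≠ 1) {w : List Δ} (h : F f w = []) : w = [] := by
  cases w with
  | nil => rfl
  | cons d w =>
      rw [F_cons] at h
      rcases List.append_eq_nil_iff.mp h with ⟨h1, -⟩
      exact absurd (toList.injective (h1.trans rfl)) (hf d)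

lemma sound {c c' : (N M f B).Cfg} {l : List (Option Δ)}
    (h : (N M f B).Steps c l c') :
    ∃ l' : List (Option Sg), M.Steps (c.1.1, c.2) l' (c'.1.1, c'.2) ∧
      l'.reduceOption ++ c'.1.2.val = c.1.2.val ++ F f l.reduceOption := by
  induction h with
  | nil c => exact ⟨[], NSA.Steps.nil _, by simp [F_nil]⟩
  | @cons c a c₁ l c'' hstep hsteps ih =>
    obtain ⟨⟨q, b⟩, T⟩ := c
    obtain ⟨⟨q₁, b₁⟩, T₁⟩ := c₁
    obtain ⟨op, hmem, happ⟩ := hstep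
    obtain ⟨l', hms, heq⟩ := ih
    cases hmem with
    | mirror q q' op b hM =>
        exact ⟨none :: l', NSA.Steps.cons ⟨op, hM, happ⟩ hms, by
          simpa using heq⟩
    | consume q q' op σ b hb hM =>
        refine ⟨some σ :: l', NSA.Steps.cons ⟨op, hM, happ⟩ hms, ?_⟩
        simpa using heq
    | read q q' op σ d b hM hfd =>
        refine ⟨some σ :: l', NSA.Steps.cons ⟨op, hM, happ⟩ hms, ?_⟩
        simp only [List.reduceOption_cons_of_some, List.cons_append, F_cons, hfd, nilB,
          List.nil_append]
        rw [heq]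

lemma complete (hf : ∀ d : Δ, f (of d) ≠ 1) (hB : ∀ d : Δ, (f (of d)).toList.length ≤ B)
    {c : M.Cfg} {l : List (Option Sg)} {c' : M.Cfg} (h : M.Steps c l c') :
    ∀ (b : Buf Sg B) (w : List Δ), l.reduceOption = b.val ++ F f w →
    ∃ l'' : List (Option Δ),
      (N M f B).Steps ((c.1, b), c.2) l'' ((c'.1, nilB Sg B), c'.2) ∧ l''.reduceOption = w := by
  induction h with
  | nil c =>
      intro b w hw
      have hb : b.val = [] := by
        have := hw.symm
        exact List.append_eq_nil_iff.mp (by simpa using this) |>.1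
      have hw' : F f w = [] := by
        have := hw.symm
        exact List.append_eq_nil_iff.mp (by simpa using this) |>.2
      have : w = [] := F_eq_nil f hf hw'
      subst this
      have : b = nilB Sg B := Subtype.ext hb
      subst this
      exact ⟨[], NSA.Steps.nil _, rfl⟩
  | @cons c a c₁ l c'' hstep hsteps ih =>
      intro b w hw
      obtain ⟨op, hmem, happ⟩ := hstep
      cases a with
      | none =>
          obtain ⟨l'', hN, hred⟩ := ih b w (by simpa using hw)
          refine ⟨none :: l'', NSA.Steps.cons ⟨op, ?_, happ⟩ hN, by simpa using hred⟩
          exact Pre.mirror c.1 c₁.1 op b hmem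
      | some σ =>
          rw [List.reduceOption_cons_of_some] at hw
          obtain ⟨bv, hbv⟩ := b
          cases bv with
          | cons σ₀ r =>
              simp only [List.cons_append] at hw
              obtain ⟨hσ, hw'⟩ := List.cons_eq_cons.mp hw
              subst hσ
              have hr : r.length ≤ B := le_trans (Nat.le_succ _) hbv
              obtain ⟨l'', hN, hred⟩ := ih ⟨r, hr⟩ w hw'
              refine ⟨none :: l'', NSA.Steps.cons ⟨op, ?_, happ⟩ hN, by simpa using hred⟩
              exact Pre.consume c.1 c₁.1 op σ ⟨r, hr⟩ hbv hmem
          | nil =>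
              simp only [List.nil_append] at hw
              cases w with
              | nil => exact absurd hw.symm (by simp [F_nil])
              | cons d w' =>
                  rw [F_cons] at hw
                  have hne : (f (of d)).toList ≠ [] := fun hh =>
                    hf d (toList.injective (hh.trans rfl))
                  obtain ⟨u, hu⟩ : ∃ u, (f (of d)).toList = σ :: u := by
                    cases hfd : (f (of d)).toList with
                    | nil => exact absurd hfd hne
                    | cons σ' u =>
                        rw [hfd] at hw
                        simp only [List.cons_append] at hw
                        exact ⟨u, by rw [(List.cons_eq_cons.mp hw).1]⟩
                  have hulen : u.length ≤ B := by
                    have := hB d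
                    rw [hu] at this
                    exact le_trans (Nat.le_succ _) (by simpa using this)
                  have hw' : l.reduceOption = u ++ F f w' := by
                    rw [hu] at hw
                    simpa using hw
                  obtain ⟨l'', hN, hred⟩ := ih ⟨u, hulen⟩ w' hw'
                  have hbeq : (⟨[], hbv⟩ : Buf Sg B) = nilB Sg B := Subtype.ext rfl
                  rw [hbeq]
                  refine ⟨some d :: l'', NSA.Steps.cons ⟨op, ?_, happ⟩ hN, by simpa using hred⟩
                  exact Pre.read c.1 c₁.1 op σ d ⟨u, hulen⟩ hmem hu

/-- Inversion for edges of the preimage automaton. -/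
lemma pre_shape {e : (M.Q × Buf Sg B) × NSAOp ℕ × Option Δ × (M.Q × Buf Sg B)}
    (he : Pre M f B e) :
    (e.2.2.1 = none ∧ e.2.2.2.2 = e.1.2 ∧
      (e.1.1, e.2.1, (none : Option Sg), e.2.2.2.1) ∈ M.edges) ∨
    (∃ σ : Sg, e.2.2.1 = none ∧ e.1.2.val = σ :: e.2.2.2.2.val ∧
      (e.1.1, e.2.1, some σ, e.2.2.2.1) ∈ M.edges) ∨
    (∃ (σ : Sg) (d : Δ), e.2.2.1 = some d ∧ e.1.2 = nilB Sg B ∧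
      (f (of d)).toList = σ :: e.2.2.2.2.val ∧
      (e.1.1, e.2.1, some σ, e.2.2.2.1) ∈ M.edges) := by
  cases he with
  | mirror q q' op b h => exact Or.inl ⟨rfl, rfl, h⟩
  | consume q q' op σ b hb h => exact Or.inr (Or.inl ⟨σ, rfl, rfl, h⟩)
  | read q q' op σ d b h hfd => exact Or.inr (Or.inr ⟨σ, d, rfl, rfl, hfd, h⟩)

lemma prod4_ext {α β γ δ : Type _} {x y : α × β × γ × δ} (h1 : x.1 = y.1)
    (h2 : x.2.1 = y.2.1) (h3 : x.2.2.1 = y.2.2.1) (h4 : x.2.2.2 = y.2.2.2) : x = y := by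
  obtain ⟨a, b, c, d⟩ := x
  obtain ⟨a', b', c', d'⟩ := y
  simp_all

lemma det (hd : M.Deterministic) (hf : ∀ d : Δ, f (of d) ≠ 1) :
    (N M f B).Deterministic := by
  rintro ⟨q, b⟩ T a e₁ e₂ he₁ he₂ h₁q h₂q h₁a h₂a h₁s h₂s
  have hne : (f (of a)).toList ≠ [] := fun hh => hf a (toList.injective hh)
  -- the source states agree
  have hsrc : e₁.1 = e₂.1 := h₁q.trans h₂q.symm
  rcases pre_shape M f B he₁ with ⟨hl₁, hb₁, hM₁⟩ | ⟨σ₁, hl₁, hb₁, hM₁⟩ |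
      ⟨σ₁, d₁, hl₁, hb₁, hfd₁, hM₁⟩ <;>
    rcases pre_shape M f B he₂ with ⟨hl₂, hb₂, hM₂⟩ | ⟨σ₂, hl₂, hb₂, hM₂⟩ |
      ⟨σ₂, d₂, hl₂, hb₂, hfd₂, hM₂⟩
  -- mirror / mirror
  · have σ₀ := (f (of a)).toList.head hne
    have heq := hd q T ((f (of a)).toList.head hne)
      (e₁.1.1, e₁.2.1, none, e₁.2.2.2.1) (e₂.1.1, e₂.2.1, none, e₂.2.2.2.1) hM₁ hM₂
      (congrArg Prod.fst h₁q) (congrArg Prod.fst h₂q) (Or.inr rfl) (Or.inr rfl) h₁s h₂s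
    have hst : e₁.1.1 = e₂.1.1 := congrArg Prod.fst hsrc
    have hop : e₁.2.1 = e₂.2.1 := congrArg (fun z => z.2.1) heq
    have htgt1 : e₁.2.2.2.1 = e₂.2.2.2.1 := congrArg (fun z => z.2.2.2) heq
    refine prod4_ext hsrc hop (hl₁.trans hl₂.symm) (Prod.ext htgt1 ?_)
    rw [hb₁, hb₂, congrArg Prod.snd hsrc]
  -- mirror / consume
  · exfalso
    have heq := hd q T σ₂
      (e₁.1.1, e₁.2.1, none, e₁.2.2.2.1) (e₂.1.1, e₂.2.1, some σ₂, e₂.2.2.2.1) hM₁ hM₂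
      (congrArg Prod.fst h₁q) (congrArg Prod.fst h₂q) (Or.inr rfl) (Or.inl rfl) h₁s h₂s
    have : (none : Option Sg) = some σ₂ := congrArg (fun z => z.2.2.1) heq
    exact nomatch this
  -- mirror / read
  · exfalso
    have heq := hd q T σ₂
      (e₁.1.1, e₁.2.1, none, e₁.2.2.2.1) (e₂.1.1, e₂.2.1, some σ₂, e₂.2.2.2.1) hM₁ hM₂
      (congrArg Prod.fst h₁q) (congrArg Prod.fst h₂q) (Or.inr rfl) (Or.inl rfl) h₁s h₂s
    have : (none : Option Sg) = some σ₂ := congrArg (fun z => z.2.2.1) heq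
    exact nomatch this
  -- consume / mirror
  · exfalso
    have heq := hd q T σ₁
      (e₁.1.1, e₁.2.1, some σ₁, e₁.2.2.2.1) (e₂.1.1, e₂.2.1, none, e₂.2.2.2.1) hM₁ hM₂
      (congrArg Prod.fst h₁q) (congrArg Prod.fst h₂q) (Or.inl rfl) (Or.inr rfl) h₁s h₂s
    have : some σ₁ = (none : Option Sg) := congrArg (fun z => z.2.2.1) heq
    exact nomatch this
  -- consume / consume
  · have hbb : σ₁ :: e₁.2.2.2.2.val = σ₂ :: e₂.2.2.2.2.val := by
      rw [← hb₁, ← hb₂, congrArg (fun z => z.2.val) hsrc]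
    obtain ⟨hσ, hbv⟩ := List.cons_eq_cons.mp hbb
    subst hσ
    have heq := hd q T σ₁
      (e₁.1.1, e₁.2.1, some σ₁, e₁.2.2.2.1) (e₂.1.1, e₂.2.1, some σ₁, e₂.2.2.2.1) hM₁ hM₂
      (congrArg Prod.fst h₁q) (congrArg Prod.fst h₂q) (Or.inl rfl) (Or.inl rfl) h₁s h₂s
    have hop : e₁.2.1 = e₂.2.1 := congrArg (fun z => z.2.1) heq
    have htgt1 : e₁.2.2.2.1 = e₂.2.2.2.1 := congrArg (fun z => z.2.2.2) heq
    exact prod4_ext hsrc hop (hl₁.trans hl₂.symm) (Prod.ext htgt1 (Subtype.ext hbv))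
  -- consume / read
  · exfalso
    have : e₁.1.2.val = ([] : List Sg) := by
      rw [congrArg (fun z => z.2) hsrc, hb₂]
      rfl
    rw [hb₁] at this
    exact nomatch this
  -- read / mirror
  · exfalso
    have heq := hd q T σ₁
      (e₁.1.1, e₁.2.1, some σ₁, e₁.2.2.2.1) (e₂.1.1, e₂.2.1, none, e₂.2.2.2.1) hM₁ hM₂
      (congrArg Prod.fst h₁q) (congrArg Prod.fst h₂q) (Or.inl rfl) (Or.inr rfl) h₁s h₂s
    have : some σ₁ = (none : Option Sg) := congrArg (fun z => z.2.2.1) heq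
    exact nomatch this
  -- read / consume
  · exfalso
    have : e₂.1.2.val = ([] : List Sg) := by
      rw [← congrArg (fun z => z.2) hsrc, hb₁]
      rfl
    rw [hb₂] at this
    exact nomatch this
  -- read / read
  · have hd₁ : d₁ = a := by
      rcases h₁a with h | h
      · exact Option.some_injective _ (hl₁.symm.trans h)
      · exact absurd (hl₁.symm.trans h) (Option.some_ne_none _)
    have hd₂ : d₂ = a := by
      rcases h₂a with h | h
      · exact Option.some_injective _ (hl₂.symm.trans h)
      · exact absurd (hl₂.symm.trans h) (Option.some_ne_none _)
    subst hd₁; subst hd₂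
    have hbb : σ₁ :: e₁.2.2.2.2.val = σ₂ :: e₂.2.2.2.2.val := hfd₁.symm.trans hfd₂
    obtain ⟨hσ, hbv⟩ := List.cons_eq_cons.mp hbb
    subst hσ
    have heq := hd q T σ₁
      (e₁.1.1, e₁.2.1, some σ₁, e₁.2.2.2.1) (e₂.1.1, e₂.2.1, some σ₁, e₂.2.2.2.1) hM₁ hM₂
      (congrArg Prod.fst h₁q) (congrArg Prod.fst h₂q) (Or.inl rfl) (Or.inl rfl) h₁s h₂s
    have hop : e₁.2.1 = e₂.2.1 := congrArg (fun z => z.2.1) heq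
    have htgt1 : e₁.2.2.2.1 = e₂.2.2.2.1 := congrArg (fun z => z.2.2.2) heq
    exact prod4_ext hsrc hop (hl₁.trans hl₂.symm) (Prod.ext htgt1 (Subtype.ext hbv))

/-- The length of the buffer at the source of the first edge of a path. -/
def bufLen : List ((M.Q × Buf Sg B) × NSAOp ℕ × Option Δ × (M.Q × Buf Sg B)) → ℕ
  | [] => 0
  | e :: _ => e.1.2.val.length

lemma bufLen_eq : ∀ (p₁ : List ((M.Q × Buf Sg B) × NSAOp ℕ × Option Δ × (M.Q × Buf Sg B)))
    (e : (M.Q × Buf Sg B) × NSAOp ℕ × Option Δ × (M.Q × Buf Sg B)) (p₂ : List _),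
    (p₁ ++ e :: p₂).Chain' (fun x y => x.2.2.2 = y.1) →
    (∀ x ∈ p₁, x.1.2 = x.2.2.2.2) →
    bufLen M B (p₁ ++ e :: p₂) = e.1.2.val.length
  | [], e, p₂, _, _ => rfl
  | x :: p₁, e, p₂, hc, hm => by
      have hc' := (List.isChain_cons.mp hc).2
      have hrel := (List.isChain_cons.mp hc).1
      have ih := bufLen_eq p₁ e p₂ hc' (fun y hy => hm y (List.mem_cons_of_mem _ hy))
      have hx : x.1.2 = x.2.2.2.2 := hm x (List.mem_cons_self)
      cases p₁ with
      | nil =>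
          have hxe : x.2.2.2 = e.1 := hrel e rfl
          show x.1.2.val.length = _
          rw [hx, hxe]
      | cons z p₁' =>
          have hxz : x.2.2.2 = z.1 := hrel z rfl
          show x.1.2.val.length = _
          rw [hx, hxz]
          exact ih

/-- The projection of a "mirror" edge to an edge of `M`. -/
def projM (x : (M.Q × Buf Sg B) × NSAOp ℕ × Option Δ × (M.Q × Buf Sg B)) :
    M.Q × NSAOp ℕ × Option Sg × M.Q := (x.1.1, x.2.1, none, x.2.2.2.1)

open scoped Classical in
lemma count_le (k : ℕ)
    (hk : ∀ p : List (M.Q × NSAOp ℕ × Option Sg × M.Q), (∀ e ∈ p, e ∈ M.edges) →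
      p.Chain' (fun e e' => e.2.2.2 = e'.1) → (∀ e ∈ p, e.2.2.1 = (none : Option Sg)) →
      p.countP (fun e => e.2.1.isPop) ≤ k) :
    ∀ (n : ℕ) (p : List ((M.Q × Buf Sg B) × NSAOp ℕ × Option Δ × (M.Q × Buf Sg B))),
      p.length ≤ n → (∀ e ∈ p, Pre M f B e) →
      p.Chain' (fun e e' => e.2.2.2 = e'.1) → (∀ e ∈ p, e.2.2.1 = (none : Option Δ)) →
      p.countP (fun e => e.2.1.isPop) ≤ bufLen M B p * (k + 1) + k := by
  -- bound for paths consisting only of mirror edges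
  have mirror_bound : ∀ p₁ : List ((M.Q × Buf Sg B) × NSAOp ℕ × Option Δ ×
      (M.Q × Buf Sg B)),
      (∀ x ∈ p₁, (x.1.1, x.2.1, (none : Option Sg), x.2.2.2.1) ∈ M.edges) →
      p₁.Chain' (fun e e' => e.2.2.2 = e'.1) →
      p₁.countP (fun e => e.2.1.isPop) ≤ k := by
    intro p₁ hmem hc
    have h1 : (p₁.map (projM M B)).countP (fun e => e.2.1.isPop)
        = p₁.countP (fun e => e.2.1.isPop) := by
      rw [List.countP_map]
      rfl
    rw [← h1]
    refine hk _ ?_ ?_ ?_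
    · intro x hx
      obtain ⟨y, hy, rfl⟩ := List.mem_map.mp hx
      exact hmem y hy
    · exact (List.isChain_map (projM M B)).mpr (hc.imp fun a b hab => congrArg Prod.fst hab)
    · intro x hx
      obtain ⟨y, hy, rfl⟩ := List.mem_map.mp hx
      rfl
  -- a "mirror" inversion
  have mir_shape : ∀ x, Pre M f B x → x.2.2.1 = none → x.1.2.val = x.2.2.2.2.val →
      (x.1.1, x.2.1, (none : Option Sg), x.2.2.2.1) ∈ M.edges := by
    intro x hx hl hb
    rcases pre_shape M f B hx with ⟨_, _, h⟩ | ⟨σ, _, hb', _⟩ | ⟨σ, d, hl', _, _, _⟩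
    · exact h
    · exfalso
      rw [hb'] at hb
      exact absurd (congrArg List.length hb) (by simp)
    · exact absurd (hl.symm.trans hl') (by simp)
  -- a "consume" inversion
  have con_shape : ∀ x, Pre M f B x → x.2.2.1 = none → x.1.2.val ≠ x.2.2.2.2.val →
      ∃ σ : Sg, x.1.2.val = σ :: x.2.2.2.2.val := by
    intro x hx hl hb
    rcases pre_shape M f B hx with ⟨_, hb', _⟩ | ⟨σ, _, hb', _⟩ | ⟨σ, d, hl', _, _, _⟩
    · exact absurd (congrArg Subtype.val hb'.symm) hb
    · exact ⟨σ, hb'⟩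
    · exact absurd (hl.symm.trans hl') (by simp)
  intro n
  induction n with
  | zero =>
      intro p hlen _ _ _
      rw [List.length_eq_zero_iff.mp (Nat.le_zero.mp hlen)]
      simp
  | succ n ih =>
      intro p hlen hp hc hl
      set P : ((M.Q × Buf Sg B) × NSAOp ℕ × Option Δ × (M.Q × Buf Sg B)) → Bool :=
        fun e => decide (e.1.2.val = e.2.2.2.2.val) with hP
      have hsplit : p.takeWhile P ++ p.dropWhile P = p := List.takeWhile_append_dropWhile
      have hmem_tk : ∀ x ∈ p.takeWhile P, x ∈ p := fun x hx => by
        rw [← hsplit]; exact List.mem_append_left _ hx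
      have hmir : ∀ x ∈ p.takeWhile P, (x.1.1, x.2.1, (none : Option Sg), x.2.2.2.1) ∈ M.edges :=
        fun x hx => mir_shape x (hp x (hmem_tk x hx)) (hl x (hmem_tk x hx))
          (by simpa [hP] using List.mem_takeWhile_imp hx)
      have hc2 : (p.takeWhile P ++ p.dropWhile P).Chain' (fun e e' => e.2.2.2 = e'.1) := by
        rw [hsplit]; exact hc
      have hc_tk : (p.takeWhile P).Chain' (fun e e' => e.2.2.2 = e'.1) :=
        (List.isChain_append.mp hc2).1
      have hbound₁ := mirror_bound (p.takeWhile P) hmir hc_tk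
      cases hp₂ : p.dropWhile P with
      | nil =>
          have hpp : p.takeWhile P = p := by conv_rhs => rw [← hsplit, hp₂, List.append_nil]
          rw [hpp] at hbound₁
          exact le_trans hbound₁ (Nat.le_add_left _ _)
      | cons e p₂' =>
          have hne : p.dropWhile P ≠ [] := by rw [hp₂]; exact List.cons_ne_nil _ _
          have h1 := List.head_dropWhile_not P hne
          have hPe : P e = false := by
            have h4 : (p.dropWhile P).head? = some e := by rw [hp₂]; rfl
            have h5 := List.head?_eq_head hne
            rw [h4] at h5
            have h6 : e = (p.dropWhile P).head hne := Option.some_injective _ h5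
            exact h6 ▸ h1
          have hp' : p = p.takeWhile P ++ e :: p₂' := by conv_lhs => rw [← hsplit, hp₂]
          have hmem_e : e ∈ p := by
            rw [hp']; exact List.mem_append_right _ (List.mem_cons_self)
          have hmem_p₂' : ∀ x ∈ p₂', x ∈ p := fun x hx => by
            rw [hp']; exact List.mem_append_right _ (List.mem_cons_of_mem _ hx)
          have hPe' : e.1.2.val ≠ e.2.2.2.2.val := by simpa [hP] using hPe
          obtain ⟨σ, hσ⟩ := con_shape e (hp e hmem_e) (hl e hmem_e) hPe'
          have hc3 : (p.takeWhile P ++ e :: p₂').Chain' (fun x y => x.2.2.2 = y.1) := by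
            rw [← hp']; exact hc
          obtain ⟨hcA, hcB, hlink⟩ := List.isChain_append.mp hc3
          have hcp₂' := (List.isChain_cons.mp hcB).2
          have hrel_e := (List.isChain_cons.mp hcB).1
          have hlen' : p₂'.length ≤ n := by
            have hL := congrArg List.length hp'
            simp only [List.length_append, List.length_cons] at hL
            omega
          have hIH := ih p₂' hlen' (fun x hx => hp x (hmem_p₂' x hx)) hcp₂'
            (fun x hx => hl x (hmem_p₂' x hx))
          have hbl : bufLen M B p₂' ≤ e.2.2.2.2.val.length := by
            cases p₂' with
            | nil => exact Nat.zero_le _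
            | cons y t =>
                have hy : e.2.2.2 = y.1 := hrel_e y rfl
                show y.1.2.val.length ≤ _
                rw [← hy]
          have hmirvals : ∀ x ∈ p.takeWhile P, x.1.2 = x.2.2.2.2 := fun x hx =>
            Subtype.ext (by simpa [hP] using List.mem_takeWhile_imp hx)
          have hblp : bufLen M B p = e.2.2.2.2.val.length + 1 := by
            conv_lhs => rw [hp']
            rw [bufLen_eq M B _ e p₂' hc3 hmirvals, hσ]
            simp
          have hcnt : List.countP (fun x => x.2.1.isPop) p
              = List.countP (fun x => x.2.1.isPop) (p.takeWhile P)
                + (List.countP (fun x => x.2.1.isPop) p₂'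
                   + if (fun x : (M.Q × Buf Sg B) × NSAOp ℕ × Option Δ ×
                       (M.Q × Buf Sg B) => x.2.1.isPop) e = true then 1 else 0) := by
            conv_lhs => rw [hp']
            rw [List.countP_append, List.countP_cons]
          have hmul : bufLen M B p₂' * (k + 1) ≤ e.2.2.2.2.val.length * (k + 1) :=
            Nat.mul_le_mul_right _ hbl
          have hite : (if (fun x : (M.Q × Buf Sg B) × NSAOp ℕ × Option Δ ×
              (M.Q × Buf Sg B) => x.2.1.isPop) e = true then 1 else 0) ≤ 1 := by
            split <;> omega
          rw [hcnt, hblp, Nat.succ_mul]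
          omega

lemma lim (hle : M.LimitedErasing) : (N M f B).LimitedErasing := by
  obtain ⟨k, hk⟩ := hle
  refine ⟨B * (k + 1) + k, fun p hp hc hl => ?_⟩
  have h := count_le M f B k hk p.length p le_rfl (fun e he => hp e he) hc hl
  refine le_trans h (Nat.add_le_add_right (Nat.mul_le_mul_right _ ?_) k)
  cases p with
  | nil => exact Nat.zero_le _
  | cons e t => exact e.1.2.2

lemma accepts_iff (hf : ∀ d : Δ, f (of d) ≠ 1) (hB : ∀ d : Δ, (f (of d)).toList.length ≤ B)
    (w : List Δ) : (N M f B).Accepts w ↔ M.Accepts (F f w) := by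
  constructor
  · rintro ⟨l, qf, hqf, hred, hsteps⟩
    obtain ⟨hq, hb⟩ := hqf
    obtain ⟨l', hms, heq⟩ := sound M f B hsteps
    refine ⟨l', qf.1, hq, ?_, hms⟩
    rw [hb] at heq
    simpa [NSA.initCfg, N, nilB, hred] using heq
  · rintro ⟨l, qf, hqf, hred, hsteps⟩
    obtain ⟨l'', hNs, hred''⟩ := complete M f B hf hB hsteps (nilB Sg B) w
      (by simpa [nilB] using hred)
    exact ⟨l'', (qf, nilB Sg B), ⟨hqf, rfl⟩, hred'', hNs⟩

end NSAPre

end PreimageConstruction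

open FreeMonoid in
/-- If `L ⊆ Σ*` is accepted by a deterministic nested stack automaton with limited
erasing and `f : Δ* → Σ*` is a monoid homomorphism mapping no generator to the empty
word, then `f⁻¹(L)` is also accepted by a deterministic nested stack automaton with
limited erasing. -/
theorem isDetLimNSALang_preimage {Sg Δ : Type} [Fintype Sg] [Fintype Δ]
    (L : Set (FreeMonoid Sg)) (hL : IsDetLimNSALang L)
    (f : FreeMonoid Δ →* FreeMonoid Sg) (hf : ∀ d : Δ, f (of d) ≠ 1) :
    IsDetLimNSALang (f ⁻¹' L) := by
  classical
  obtain ⟨M, hdet, hlim, hML⟩ := hL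
  obtain ⟨B, hBd⟩ : ∃ B : ℕ, ∀ d : Δ, (f (of d)).toList.length ≤ B :=
    ⟨Finset.univ.sup (fun d : Δ => (f (of d)).toList.length), fun d =>
      Finset.le_sup (f := fun d : Δ => (f (of d)).toList.length) (Finset.mem_univ d)⟩
  refine ⟨NSAPre.N M f B, NSAPre.det M f B hdet hf, NSAPre.lim M f B hlim, ?_⟩
  ext w
  constructor
  · intro hw
    have h1 := (NSAPre.accepts_iff M f B hf hBd w).mp hw
    show f w ∈ L
    rw [← hML]
    exact h1
  · intro hw
    rw [← hML] at hw
    exact (NSAPre.accepts_iff M f B hf hBd w).mpr hw
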